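/- arXiv:2409.06373 — 2 statements merged into one kernel-verified Lean document; each statement's English description precedes it below -/
import Mathlib

section
/- Let π=⟨v_0,…,v_k⟩ (k ≥ 1) be a path in a task-assistance instance with ℓ_π(v_k) ≤ 1 (so that at least one timing profile for π exists). Then there exists a timing profile T* = ⟨t*_0,…,t*_{k−1}⟩ for π such that t*_i ∈ ct_i for every 0 ≤ i ≤ k−1 and R(π,T*) ≥ R(π,T) for every timing profile T for π; i.e., an optimal timing profile exists all of whose timestamps are vertex-critical times. -/
/-!
Write the timestamps as `t_i = ℓ⁺(v_i) + s_i`. Timing profiles are then exactly the slack vectors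
with `0 ≤ s_0 ≤ ⋯ ≤ s_{k-1} ≤ 1 - ℓ_π(v_k)`, and the vertex-critical times are the translates
`ℓ⁺(v_i) + c` of one finite set `C` of critical slacks, which contains `0` and `1 - ℓ_π(v_k)`.
If some level `c` taken by the slacks is not in `C`, move all slacks equal to `c` together to `d`.
Between the neighbouring levels and points of `C` around `c`, every summand of the reward is the
positive part of an affine function of `d`, so the reward is convex in `d` and does not decrease
when `d` is pushed to one end of that gap. Each such move lowers the number of non-critical levels,
so every profile is dominated by one with critical slacks, and the best of these finitely many
profiles is optimal.
-/

open MeasureTheory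
open scoped Classical

/-- A task-assistance instance: a directed graph on vertex type `V` with
nonnegative edge lengths and, for each vertex, a finite set of closed
subintervals of `[0,1]` (an interval is encoded as a pair `(t_s, t_e)`). -/
structure TAI (V : Type) where
  E : V → V → Prop
  len : V → V → ℝ
  len_nonneg : ∀ u v, 0 ≤ len u v
  I : V → Finset (ℝ × ℝ)
  I_valid : ∀ v p, p ∈ I v → 0 ≤ p.1 ∧ p.1 ≤ p.2 ∧ p.2 ≤ 1

/-- `v 0, v 1, …, v k` is a path in `G`. -/
def IsPath {V : Type} (G : TAI V) (v : ℕ → V) (k : ℕ) : Prop :=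
  ∀ i, i < k → G.E (v i) (v (i + 1))

/-- `ℓ_π(v_i)`: length of the path from `v 0` to `v i`. -/
noncomputable def pathLen {V : Type} (G : TAI V) (v : ℕ → V) (i : ℕ) : ℝ :=
  ∑ j ∈ Finset.range i, G.len (v j) (v (j + 1))

/-- `ℓ⁺_π(v_i)`: length from `v 0` to the middle of the outgoing edge of `v i`
(with the convention `ℓ(v_k, v_{k+1}) = 0`). -/
noncomputable def ellPlus {V : Type} (G : TAI V) (v : ℕ → V) (k i : ℕ) : ℝ :=
  pathLen G v i + (if i < k then G.len (v i) (v (i + 1)) / 2 else 0)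

/-- `ℓ⁻_π(v_i)`: length from `v 0` to the middle of the incoming edge of `v i`
(with the convention `ℓ(v_{-1}, v_0) = 0`). -/
noncomputable def ellMinus {V : Type} (G : TAI V) (v : ℕ → V) (i : ℕ) : ℝ :=
  pathLen G v i - (if i = 0 then 0 else G.len (v (i - 1)) (v i) / 2)

/-- The interval family along the path, augmented with the degenerate interval
`[ℓ⁺(v_0), ℓ⁺(v_0)]` at index `0` and
`[1 - (ℓ⁺(v_k) - ℓ⁺(v_{k-1})), 1 - (ℓ⁺(v_k) - ℓ⁺(v_{k-1}))]` at index `k`. -/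
noncomputable def augI {V : Type} (G : TAI V) (v : ℕ → V) (k i : ℕ) : Finset (ℝ × ℝ) :=
  if i = 0 then insert (ellPlus G v k 0, ellPlus G v k 0) (G.I (v 0))
  else if i = k then
    insert (1 - (ellPlus G v k k - ellPlus G v k (k - 1)),
            1 - (ellPlus G v k k - ellPlus G v k (k - 1))) (G.I (v k))
  else G.I (v i)

/-- Type-T1 vertex-pair critical times of `ct(v_a, v_b)`: for each interval
`[t_s, t_e]` of `v_a`, the time `t_e`. -/
def ctT1 {V : Type} (G : TAI V) (v : ℕ → V) (k a : ℕ) : Set ℝ :=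
  {t | ∃ p ∈ augI G v k a, t = p.2}

/-- Type-T2 vertex-pair critical times of `ct(v_a, v_b)`: for each interval
`[t_s, t_e]` of `v_b`, the time `t_s - (ℓ⁻(v_b) - ℓ⁺(v_a))`. -/
def ctT2 {V : Type} (G : TAI V) (v : ℕ → V) (k a b : ℕ) : Set ℝ :=
  {t | ∃ p ∈ augI G v k b, t = p.1 - (ellMinus G v b - ellPlus G v k a)}

/-- Vertex-pair critical times `ct(v_a, v_b)`. -/
def ctPair {V : Type} (G : TAI V) (v : ℕ → V) (k a b : ℕ) : Set ℝ :=
  ctT1 G v k a ∪ ctT2 G v k a b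

/-- Vertex-critical times `ct_i = ⋃_{a<b≤k} { t + ℓ⁺(v_i) - ℓ⁺(v_a) : t ∈ ct(v_a, v_b) }`. -/
def ctVert {V : Type} (G : TAI V) (v : ℕ → V) (k i : ℕ) : Set ℝ :=
  ⋃ (a : ℕ) (b : ℕ) (_ : a < b) (_ : b ≤ k),
    (fun t => t + (ellPlus G v k i - ellPlus G v k a)) '' ctPair G v k a b

/-- `T 0, …, T (k-1)` is a timing profile for the path `v 0, …, v k`:
`T 0 ≥ ℓ⁺(v_0)`, `T (i+1) ≥ T i + ℓ⁺(v_i, v_{i+1})` for `0 ≤ i ≤ k-2`, and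
`T (k-1) + ℓ⁺(v_{k-1}, v_k) ≤ 1`. -/
def IsTP {V : Type} (G : TAI V) (v : ℕ → V) (k : ℕ) (T : ℕ → ℝ) : Prop :=
  (1 ≤ k → ellPlus G v k 0 ≤ T 0) ∧
  (∀ i, i + 2 ≤ k → T i + (ellPlus G v k (i + 1) - ellPlus G v k i) ≤ T (i + 1)) ∧
  (1 ≤ k → T (k - 1) + (ellPlus G v k k - ellPlus G v k (k - 1)) ≤ 1)

/-- Reward at a vertex `u` between times `t` and `t'`:
`R(u, t, t') = Σ_{I ∈ 𝓘(u)} λ([t,t'] ∩ I)`. -/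
noncomputable def vReward {V : Type} (G : TAI V) (u : V) (t t' : ℝ) : ℝ :=
  ∑ p ∈ G.I u, (volume (Set.Icc t t' ∩ Set.Icc p.1 p.2)).toReal

/-- Reward of a timing profile: `R(π, T) = Σ_{i=0}^{k} R(v_i, t_{i-1}, t_i)`
with the conventions `t_{-1} = 0` and `t_k = 1`. -/
noncomputable def profReward {V : Type} (G : TAI V) (v : ℕ → V) (k : ℕ) (T : ℕ → ℝ) : ℝ :=
  ∑ i ∈ Finset.range (k + 1),
    vReward G (v i) (if i = 0 then 0 else T (i - 1)) (if i = k then 1 else T i)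

open Set

theorem convexOn_finset_sum {𝕜 E β ι : Type*} [Semiring 𝕜] [PartialOrder 𝕜] [AddCommMonoid E]
    [SMul 𝕜 E] [AddCommMonoid β] [PartialOrder β] [IsOrderedAddMonoid β] [Module 𝕜 β]
    {s : Set E} (hs : Convex 𝕜 s) (t : Finset ι) {f : ι → E → β}
    (hf : ∀ i ∈ t, ConvexOn 𝕜 s (f i)) : ConvexOn 𝕜 s fun x => ∑ i ∈ t, f i x := by
  induction t using Finset.induction_on with
  | empty => simpa using convexOn_const 0 hs
  | insert a t ha ih =>
    simp_rw [Finset.sum_insert ha]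
    exact (hf a (t.mem_insert_self a)).add (ih fun i hi => hf i (Finset.mem_insert_of_mem hi))

section Affine

variable {d₁ d₂ : ℝ}

theorem convexOn_max_zero_of_eqOn_affine {f : ℝ → ℝ} {A B : ℝ}
    (hf : EqOn f (fun d => A * d + B) (Icc d₁ d₂)) : ConvexOn ℝ (Icc d₁ d₂) fun d => max (f d) 0 := by
  have h : ConvexOn ℝ (Icc d₁ d₂) fun d => A * d + B :=
    ((LinearMap.mul ℝ ℝ A).convexOn (convex_Icc d₁ d₂)).add_const B
  refine (h.sup (convexOn_const 0 (convex_Icc d₁ d₂))).congr fun d hd => ?_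
  simp [hf hd]

theorem exists_eqOn_affine_min_add {e b : ℝ} (h : b - e ∉ Ioo d₁ d₂) :
    ∃ A B : ℝ, EqOn (fun d => min (e + d) b) (fun d => A * d + B) (Icc d₁ d₂) := by
  rw [mem_Ioo, not_and_or, not_lt, not_lt] at h
  rcases h with h | h
  · exact ⟨0, b, fun d hd => by simp only; rw [min_eq_right (by linarith [hd.1])]; ring⟩
  · exact ⟨1, e, fun d hd => by simp only; rw [min_eq_left (by linarith [hd.2])]; ring⟩

theorem exists_eqOn_affine_max_add {e a : ℝ} (h : a - e ∉ Ioo d₁ d₂) :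
    ∃ A B : ℝ, EqOn (fun d => max (e + d) a) (fun d => A * d + B) (Icc d₁ d₂) := by
  rw [mem_Ioo, not_and_or, not_lt, not_lt] at h
  rcases h with h | h
  · exact ⟨1, e, fun d hd => by simp only; rw [max_eq_left (by linarith [hd.1])]; ring⟩
  · exact ⟨0, a, fun d hd => by simp only; rw [max_eq_right (by linarith [hd.2])]; ring⟩

theorem exists_eqOn_affine_min_add_ite (P : Prop) [Decidable P] {e y b : ℝ}
    (h : P → b - e ∉ Ioo d₁ d₂) :
    ∃ A B : ℝ, EqOn (fun d => min (e + if P then d else y) b) (fun d => A * d + B) (Icc d₁ d₂) := by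
  by_cases hP : P
  · simpa [hP] using exists_eqOn_affine_min_add (h hP)
  · exact ⟨0, min (e + y) b, fun d _ => by simp [hP]⟩

theorem exists_eqOn_affine_max_add_ite (P : Prop) [Decidable P] {e y a : ℝ}
    (h : P → a - e ∉ Ioo d₁ d₂) :
    ∃ A B : ℝ, EqOn (fun d => max (e + if P then d else y) a) (fun d => A * d + B) (Icc d₁ d₂) := by
  by_cases hP : P
  · simpa [hP] using exists_eqOn_affine_max_add (h hP)
  · exact ⟨0, max (e + y) a, fun d _ => by simp [hP]⟩

theorem convexOn_max_min_sub_max_zero {x y : ℝ → ℝ} {a b : ℝ}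
    (hy : ∃ A B : ℝ, EqOn (fun d => min (y d) b) (fun d => A * d + B) (Icc d₁ d₂))
    (hx : ∃ A B : ℝ, EqOn (fun d => max (x d) a) (fun d => A * d + B) (Icc d₁ d₂)) :
    ConvexOn ℝ (Icc d₁ d₂) fun d => max (min (y d) b - max (x d) a) 0 := by
  obtain ⟨A, B, hAB⟩ := hy
  obtain ⟨A', B', hAB'⟩ := hx
  refine convexOn_max_zero_of_eqOn_affine (A := A - A') (B := B - B') fun d hd => ?_
  simp only [hAB hd, hAB' hd]
  ring

end Affine

section LevelMoves

variable {ι : Type*}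

noncomputable def replaceLevel (s : ι → ℝ) (c d : ℝ) : ι → ℝ := fun i => if s i = c then d else s i

@[simp]
theorem replaceLevel_self (s : ι → ℝ) (c : ℝ) : replaceLevel s c c = s := by
  funext i
  by_cases h : s i = c <;> simp [replaceLevel, h]

def monotoneIcc [Preorder ι] (L : ℝ) : Set (ι → ℝ) := {s | Monotone s ∧ ∀ i, s i ∈ Icc 0 L}

theorem replaceLevel_mem_monotoneIcc [Preorder ι] {L : ℝ} {s : ι → ℝ} (hs : s ∈ monotoneIcc L)
    {c d d₁ d₂ : ℝ} (hd₁ : 0 ≤ d₁) (hd₂ : d₂ ≤ L) (hd : d ∈ Icc d₁ d₂)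
    (hbelow : ∀ i, s i < c → s i ≤ d₁) (habove : ∀ i, c < s i → d₂ ≤ s i) :
    replaceLevel s c d ∈ monotoneIcc L := by
  refine ⟨fun i j hij => ?_, fun i => ?_⟩
  · have hle := hs.1 hij
    unfold replaceLevel
    split_ifs with hi hj hj
    · exact le_rfl
    · exact hd.2.trans (habove j (lt_of_le_of_ne (hi ▸ hle) (Ne.symm hj)))
    · exact (hbelow i (lt_of_le_of_ne (hj ▸ hle) hi)).trans hd.1
    · exact hle
  · unfold replaceLevel
    split_ifs
    · exact ⟨hd₁.trans hd.1, hd.2.trans hd₂⟩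
    · exact hs.2 i

variable [Fintype ι]

theorem card_levels_not_mem_replaceLevel_lt {C : Set ℝ} {s : ι → ℝ} {c d : ℝ}
    (hc : c ∈ range s) (hcC : c ∉ C) (hdc : d ≠ c) (hd : d ∈ C ∪ range s) :
    ((Finset.univ.image (replaceLevel s c d)).filter (· ∉ C)).card <
      ((Finset.univ.image s).filter (· ∉ C)).card := by
  refine (Finset.card_le_card fun y hy => ?_).trans_lt
    (Finset.card_erase_lt_of_mem (a := c) (by obtain ⟨i, rfl⟩ := hc; simpa using hcC))
  simp only [Finset.mem_filter, Finset.mem_image, Finset.mem_univ, true_and] at hy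
  obtain ⟨⟨i, rfl⟩, hyC⟩ := hy
  simp only [Finset.mem_erase, Finset.mem_filter, Finset.mem_image, Finset.mem_univ, true_and]
  unfold replaceLevel at hyC ⊢
  split_ifs at hyC ⊢ with hi
  · exact ⟨hdc, (hd.resolve_left hyC), hyC⟩
  · exact ⟨hi, ⟨i, rfl⟩, hyC⟩

variable [Preorder ι] {L : ℝ} {C : Set ℝ} {F : (ι → ℝ) → ℝ}

theorem exists_forall_mem_le_of_convexOn_replaceLevel (hC : C.Finite) (h0 : 0 ∈ C) (hL : L ∈ C)
    (hF : ∀ s c d₁ d₂, (∀ x ∈ C, x ∉ Ioo d₁ d₂) →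
      ConvexOn ℝ (Icc d₁ d₂) fun d => F (replaceLevel s c d))
    {s : ι → ℝ} (hs : s ∈ monotoneIcc L) :
    ∃ s' ∈ monotoneIcc L, (∀ i, s' i ∈ C) ∧ F s ≤ F s' := by
  induction hn : ((Finset.univ.image s).filter (· ∉ C)).card using Nat.strong_induction_on
    generalizing s with
  | _ n ih =>
  by_cases hsC : ∀ i, s i ∈ C
  · exact ⟨s, hs, hsC, le_rfl⟩
  obtain ⟨i₀, hi₀⟩ := not_forall.1 hsC
  set c := s i₀
  set B := (C ∪ range s) \ {c}
  have hB : B.Finite := (hC.union (finite_range s)).sdiff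
  have h0B : 0 ∈ B := ⟨Or.inl h0, fun h => hi₀ (h ▸ h0)⟩
  have hLB : L ∈ B := ⟨Or.inl hL, fun h => hi₀ (h ▸ hL)⟩
  have hc0 : 0 < c := lt_of_le_of_ne (hs.2 i₀).1 fun h => hi₀ (h ▸ h0)
  have hcL : c < L := lt_of_le_of_ne (hs.2 i₀).2 fun h => hi₀ (h ▸ hL)
  obtain ⟨d₁, ⟨hd₁B, hd₁c⟩, hd₁max⟩ :=
    (B ∩ Iio c).exists_max_image id (hB.inter_of_left _) ⟨0, h0B, hc0⟩
  obtain ⟨d₂, ⟨hd₂B, hd₂c⟩, hd₂min⟩ :=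
    (B ∩ Ioi c).exists_min_image id (hB.inter_of_left _) ⟨L, hLB, hcL⟩
  have hbelow : ∀ x ∈ B, x < c → x ≤ d₁ := fun x hx hxc => hd₁max x ⟨hx, hxc⟩
  have habove : ∀ x ∈ B, c < x → d₂ ≤ x := fun x hx hxc => hd₂min x ⟨hx, hxc⟩
  have hsB : ∀ i, s i ≠ c → s i ∈ B := fun i hi => ⟨Or.inr ⟨i, rfl⟩, hi⟩
  have hgap : ∀ x ∈ C, x ∉ Ioo d₁ d₂ := by
    rintro x hx ⟨h₁, h₂⟩
    have hxB : x ∈ B := ⟨Or.inl hx, fun h => hi₀ (h ▸ hx)⟩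
    rcases lt_or_gt_of_ne hxB.2 with hxc | hxc
    · exact (hbelow x hxB hxc).not_gt h₁
    · exact (habove x hxB hxc).not_gt h₂
  have hmove : ∀ d ∈ B, d ∈ Icc d₁ d₂ →
      ∃ s' ∈ monotoneIcc L, (∀ i, s' i ∈ C) ∧ F (replaceLevel s c d) ≤ F s' := by
    intro d hdB hd
    refine ih _ ?_ (replaceLevel_mem_monotoneIcc hs (hbelow 0 h0B hc0) (habove L hLB hcL) hd
      (fun i hi => hbelow _ (hsB i hi.ne) hi) (fun i hi => habove _ (hsB i hi.ne') hi)) rfl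
    exact hn ▸ card_levels_not_mem_replaceLevel_lt ⟨i₀, rfl⟩ hi₀ hdB.2 hdB.1
  have hmax : F s ≤ max (F (replaceLevel s c d₁)) (F (replaceLevel s c d₂)) := by
    simpa using (hF s c d₁ d₂ hgap).le_max_of_mem_Icc (left_mem_Icc.2 (hd₁c.trans hd₂c).le)
      (right_mem_Icc.2 (hd₁c.trans hd₂c).le) ⟨hd₁c.le, hd₂c.le⟩
  rcases le_max_iff.1 hmax with h | h
  · obtain ⟨s', hs', hs'C, hle⟩ := hmove d₁ hd₁B ⟨le_rfl, (hd₁c.trans hd₂c).le⟩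
    exact ⟨s', hs', hs'C, h.trans hle⟩
  · obtain ⟨s', hs', hs'C, hle⟩ := hmove d₂ hd₂B ⟨(hd₁c.trans hd₂c).le, le_rfl⟩
    exact ⟨s', hs', hs'C, h.trans hle⟩

theorem exists_isMaxOn_monotoneIcc_of_convexOn_replaceLevel (hC : C.Finite) (h0 : 0 ∈ C)
    (hL : L ∈ C) (hL0 : 0 ≤ L)
    (hF : ∀ s c d₁ d₂, (∀ x ∈ C, x ∉ Ioo d₁ d₂) →
      ConvexOn ℝ (Icc d₁ d₂) fun d => F (replaceLevel s c d)) :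
    ∃ s ∈ monotoneIcc L, (∀ i, s i ∈ C) ∧ IsMaxOn F (monotoneIcc L) s := by
  set K := monotoneIcc L ∩ {s : ι → ℝ | ∀ i, s i ∈ C}
  have hK : K.Finite := (Finite.pi fun _ => hC).subset fun s hs => by simpa using hs.2
  have h0K : (fun _ => 0) ∈ K := ⟨⟨monotone_const, fun _ => ⟨le_rfl, hL0⟩⟩, fun _ => h0⟩
  obtain ⟨s, ⟨hs, hsC⟩, hmax⟩ := K.exists_max_image F hK ⟨_, h0K⟩
  refine ⟨s, hs, hsC, fun t ht => ?_⟩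
  obtain ⟨t', ht', ht'C, hle⟩ := exists_forall_mem_le_of_convexOn_replaceLevel hC h0 hL hF ht
  exact hle.trans (hmax t' ⟨ht', ht'C⟩)

end LevelMoves

section TaskAssistance

variable {V : Type} (G : TAI V) (v : ℕ → V) (k : ℕ)

theorem vReward_eq_sum_max (u : V) (x y : ℝ) :
    vReward G u x y = ∑ p ∈ G.I u, max (min y p.2 - max x p.1) 0 := by
  refine Finset.sum_congr rfl fun p _ => ?_
  rw [Set.Icc_inter_Icc, Real.volume_Icc, ENNReal.toReal_ofReal']

theorem profReward_congr {T T' : ℕ → ℝ} (h : ∀ i < k, T i = T' i) :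
    profReward G v k T = profReward G v k T' := by
  refine Finset.sum_congr rfl fun m hm => ?_
  have hm : m < k + 1 := Finset.mem_range.1 hm
  congr 1 <;> split_ifs <;> first | rfl | exact h _ (by omega)

theorem ellPlus_self : ellPlus G v k k = pathLen G v k := by
  simp [ellPlus]

theorem ellMinus_eq_ellPlus_pred {b : ℕ} (hb : 1 ≤ b) (hbk : b ≤ k) :
    ellMinus G v b = ellPlus G v k (b - 1) := by
  obtain ⟨j, rfl⟩ : ∃ j, b = j + 1 := ⟨b - 1, by omega⟩
  simp only [ellMinus, ellPlus, pathLen, Finset.sum_range_succ, Nat.add_sub_cancel,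
    if_pos (show j < k by omega), Nat.succ_ne_zero, if_false]
  ring

/-- The vertex-critical times as slacks: `ctVert G v k i` is this set translated by `ℓ⁺(v_i)`. -/
def critSlack : Set ℝ :=
  ⋃ a ∈ Iio k, ⋃ b ∈ Ioc a k, (· - ellPlus G v k a) '' ctPair G v k a b

theorem critSlack_finite : (critSlack G v k).Finite := by
  refine (finite_Iio k).biUnion fun a _ => (finite_Ioc a k).biUnion fun b _ => Finite.image _ ?_
  refine (((augI G v k a).finite_toSet.image Prod.snd).union
    ((augI G v k b).finite_toSet.image fun p => p.1 - (ellMinus G v b - ellPlus G v k a))).subset ?_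
  rintro t (⟨p, hp, rfl⟩ | ⟨p, hp, rfl⟩)
  · exact Or.inl ⟨p, hp, rfl⟩
  · exact Or.inr ⟨p, hp, rfl⟩

variable {G v k}

theorem I_subset_augI (m : ℕ) : G.I (v m) ⊆ augI G v k m := by
  unfold augI
  split_ifs with h₀ hk
  · exact h₀ ▸ Finset.subset_insert _ _
  · exact hk ▸ Finset.subset_insert _ _
  · exact subset_rfl

theorem add_mem_ctVert {c : ℝ} (hc : c ∈ critSlack G v k) (i : ℕ) :
    ellPlus G v k i + c ∈ ctVert G v k i := by
  simp only [critSlack, mem_iUnion, mem_image, mem_Iio, mem_Ioc] at hc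
  obtain ⟨a, ha, b, ⟨hab, hbk⟩, t, ht, rfl⟩ := hc
  simp only [ctVert, mem_iUnion, mem_image]
  exact ⟨a, b, hab, hbk, t, ht, by ring⟩

theorem snd_sub_ellPlus_mem_critSlack {a : ℕ} (ha : a < k) {p : ℝ × ℝ}
    (hp : p ∈ augI G v k a) : p.2 - ellPlus G v k a ∈ critSlack G v k := by
  simp only [critSlack, mem_iUnion, mem_image, mem_Iio, mem_Ioc]
  exact ⟨a, ha, k, ⟨ha, le_rfl⟩, _, Or.inl ⟨p, hp, rfl⟩, rfl⟩

theorem fst_sub_ellPlus_pred_mem_critSlack {b : ℕ} (hb : 1 ≤ b) (hbk : b ≤ k) {p : ℝ × ℝ}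
    (hp : p ∈ augI G v k b) : p.1 - ellPlus G v k (b - 1) ∈ critSlack G v k := by
  simp only [critSlack, mem_iUnion, mem_image, mem_Iio, mem_Ioc]
  refine ⟨b - 1, by omega, b, ⟨by omega, hbk⟩, _, Or.inr ⟨p, hp, rfl⟩, ?_⟩
  rw [ellMinus_eq_ellPlus_pred G v k hb hbk]
  ring

theorem zero_mem_critSlack (hk : 1 ≤ k) : 0 ∈ critSlack G v k := by
  simpa using snd_sub_ellPlus_mem_critSlack (G := G) (v := v) hk
    (p := (ellPlus G v k 0, ellPlus G v k 0)) (by simp [augI])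

theorem one_sub_pathLen_mem_critSlack (hk : 1 ≤ k) : 1 - pathLen G v k ∈ critSlack G v k := by
  have h := fst_sub_ellPlus_pred_mem_critSlack (G := G) (v := v) hk le_rfl
    (p := (1 - (ellPlus G v k k - ellPlus G v k (k - 1)),
      1 - (ellPlus G v k k - ellPlus G v k (k - 1)))) (by simp [augI, show k ≠ 0 by omega])
  convert h using 1
  rw [ellPlus_self]
  ring

variable (G v k)

noncomputable def toProfile (s : Fin k → ℝ) : ℕ → ℝ :=
  fun i => ellPlus G v k i + if h : i < k then s ⟨i, h⟩ else 0

variable {G v k}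

theorem toProfile_of_lt (s : Fin k → ℝ) {i : ℕ} (hi : i < k) :
    toProfile G v k s i = ellPlus G v k i + s ⟨i, hi⟩ := by
  simp [toProfile, hi]

theorem isTP_toProfile {s : Fin k → ℝ} (hs : s ∈ monotoneIcc (1 - pathLen G v k)) :
    IsTP G v k (toProfile G v k s) := by
  refine ⟨fun hk => ?_, fun i hi => ?_, fun hk => ?_⟩
  · rw [toProfile_of_lt s hk]
    linarith [(hs.2 ⟨0, hk⟩).1]
  · rw [toProfile_of_lt s (by omega), toProfile_of_lt s (by omega)]
    linarith [hs.1 (show (⟨i, by omega⟩ : Fin k) ≤ ⟨i + 1, by omega⟩ from Nat.le_succ i)]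
  · rw [toProfile_of_lt s (by omega), ellPlus_self]
    linarith [(hs.2 ⟨k - 1, by omega⟩).2]

theorem sub_ellPlus_mem_monotoneIcc (hk : 1 ≤ k) {T : ℕ → ℝ} (hT : IsTP G v k T) :
    (fun i : Fin k => T i - ellPlus G v k i) ∈ monotoneIcc (1 - pathLen G v k) := by
  have hmono : ∀ i j, i ≤ j → j < k → T i - ellPlus G v k i ≤ T j - ellPlus G v k j := by
    intro i j hij
    induction j, hij using Nat.le_induction with
    | base => exact fun _ => le_rfl
    | succ j _ ih => exact fun hj => (ih (by omega)).trans (by linarith [hT.2.1 j (by omega)])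
  refine ⟨fun i j hij => hmono i j hij j.2, fun i => ⟨?_, ?_⟩⟩
  · linarith [hT.1 hk, hmono 0 i (Nat.zero_le _) i.2]
  · have hlast := hT.2.2 hk
    rw [ellPlus_self] at hlast
    linarith [hmono i (k - 1) (by omega) (by omega)]

theorem profReward_toProfile_sub_ellPlus (T : ℕ → ℝ) :
    profReward G v k (toProfile G v k fun i => T i - ellPlus G v k i) = profReward G v k T :=
  profReward_congr G v k fun i hi => by rw [toProfile_of_lt _ hi]; ring

theorem convexOn_profReward_toProfile_replaceLevel (s : Fin k → ℝ) (c : ℝ) {d₁ d₂ : ℝ}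
    (hgap : ∀ x ∈ critSlack G v k, x ∉ Ioo d₁ d₂) :
    ConvexOn ℝ (Icc d₁ d₂) fun d => profReward G v k (toProfile G v k (replaceLevel s c d)) := by
  simp only [profReward, vReward_eq_sum_max]
  refine convexOn_finset_sum (convex_Icc _ _) _ fun m hm => convexOn_finset_sum (convex_Icc _ _) _
    fun p hp => convexOn_max_min_sub_max_zero ?_ ?_
  · by_cases hmk : m = k
    · exact ⟨0, min 1 p.2, fun d _ => by simp [hmk]⟩
    have hm : m < k := by have := Finset.mem_range.1 hm; omega
    simp only [hmk, if_false, toProfile_of_lt _ hm, replaceLevel]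
    exact exists_eqOn_affine_min_add_ite _ fun _ =>
      hgap _ (snd_sub_ellPlus_mem_critSlack hm (I_subset_augI m hp))
  · by_cases hm0 : m = 0
    · exact ⟨0, max 0 p.1, fun d _ => by simp [hm0]⟩
    have hm : m ≤ k := by have := Finset.mem_range.1 hm; omega
    simp only [hm0, if_false, toProfile_of_lt _ (show m - 1 < k by omega), replaceLevel]
    exact exists_eqOn_affine_max_add_ite _ fun _ =>
      hgap _ (fst_sub_ellPlus_pred_mem_critSlack (by omega) hm (I_subset_augI m hp))

end TaskAssistance

theorem stmt3_general {V : Type} (G : TAI V) (v : ℕ → V) (k : ℕ) (hk : 1 ≤ k)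
    (hlen : pathLen G v k ≤ 1) :
    ∃ T : ℕ → ℝ, IsTP G v k T ∧ (∀ i, i < k → T i ∈ ctVert G v k i) ∧
      ∀ T' : ℕ → ℝ, IsTP G v k T' → profReward G v k T' ≤ profReward G v k T := by
  obtain ⟨s, hs, hsC, hmax⟩ := exists_isMaxOn_monotoneIcc_of_convexOn_replaceLevel
    (F := fun s => profReward G v k (toProfile G v k s))
    (critSlack_finite G v k) (zero_mem_critSlack hk) (one_sub_pathLen_mem_critSlack hk)
    (sub_nonneg.2 hlen) fun s c _ _ => convexOn_profReward_toProfile_replaceLevel s c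
  refine ⟨toProfile G v k s, isTP_toProfile hs, fun i hi => ?_, fun T hT => ?_⟩
  · rw [toProfile_of_lt s hi]
    exact add_mem_ctVert (hsC ⟨i, hi⟩) i
  · rw [← profReward_toProfile_sub_ellPlus T]
    exact hmax (sub_ellPlus_mem_monotoneIcc hk hT)

/-- **Theorem 1.** For any path `π = ⟨v_0, …, v_k⟩` (k ≥ 1) with
`ℓ_π(v_k) ≤ 1`, there exists an optimal timing profile all of whose timestamps
are vertex-critical times. -/
theorem stmt3 {V : Type} (G : TAI V) (v : ℕ → V) (k : ℕ) (hk : 1 ≤ k)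
    (hpath : IsPath G v k) (hlen : pathLen G v k ≤ 1) :
    ∃ T : ℕ → ℝ, IsTP G v k T ∧ (∀ i, i < k → T i ∈ ctVert G v k i) ∧
      ∀ T' : ℕ → ℝ, IsTP G v k T' → profReward G v k T' ≤ profReward G v k T :=
  stmt3_general G v k hk hlen
end

section
/- Let π=⟨v_0,…,v_k⟩ be a path in a task-assistance instance, let T=⟨t_0,…,t_{k−1}⟩ be a timing profile for π, let 0 ≤ i ≤ k−1, and let t′ ≤ t_i be a real satisfying t′ ≥ ℓ⁺_π(v_0) if i=0 and t′ ≥ t_{i−1} + ℓ⁺_π(v_{i−1},v_i) if i ≥ 1, and such that R(v_i, t′, t_i) = 0. Then the sequence T′ obtained from T by replacing t_i with t′ is again a timing profile for π, and R(π,T′) ≥ R(π,T). -/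
open MeasureTheory
open scoped Classical

lemma vol_inter_ne_top (s : Set ℝ) (a b : ℝ) : volume (s ∩ Set.Icc a b) ≠ ⊤ := by
  have h : volume (s ∩ Set.Icc a b) ≤ volume (Set.Icc a b) :=
    volume.mono Set.inter_subset_right
  exact ne_top_of_le_ne_top (by simp [Real.volume_Icc]) h

lemma vReward_nonneg {V : Type} (G : TAI V) (u : V) (a b : ℝ) : 0 ≤ vReward G u a b :=
  Finset.sum_nonneg fun _ _ => ENNReal.toReal_nonneg

lemma vReward_split {V : Type} (G : TAI V) (u : V) (a b c : ℝ) :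
    vReward G u a c ≤ vReward G u a b + vReward G u b c := by
  rw [vReward, vReward, vReward, ← Finset.sum_add_distrib]
  refine Finset.sum_le_sum fun p _ => ?_
  have h1 : Set.Icc a c ∩ Set.Icc p.1 p.2 ⊆
      (Set.Icc a b ∩ Set.Icc p.1 p.2) ∪ (Set.Icc b c ∩ Set.Icc p.1 p.2) := by
    intro x hx
    rcases le_or_gt x b with h | h
    · exact Or.inl ⟨⟨hx.1.1, h⟩, hx.2⟩
    · exact Or.inr ⟨⟨h.le, hx.1.2⟩, hx.2⟩
  have h2 : volume (Set.Icc a c ∩ Set.Icc p.1 p.2) ≤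
      volume (Set.Icc a b ∩ Set.Icc p.1 p.2) + volume (Set.Icc b c ∩ Set.Icc p.1 p.2) :=
    (measure_mono h1).trans (measure_union_le _ _)
  have hB := vol_inter_ne_top (Set.Icc a b) p.1 p.2
  have hC := vol_inter_ne_top (Set.Icc b c) p.1 p.2
  calc (volume (Set.Icc a c ∩ Set.Icc p.1 p.2)).toReal
      ≤ (volume (Set.Icc a b ∩ Set.Icc p.1 p.2) + volume (Set.Icc b c ∩ Set.Icc p.1 p.2)).toReal := by
        refine ENNReal.toReal_mono ?_ h2
        exact ENNReal.add_ne_top.mpr ⟨hB, hC⟩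
    _ = _ := ENNReal.toReal_add hB hC

lemma vReward_mono_left {V : Type} (G : TAI V) (u : V) (a a' b : ℝ) (h : a' ≤ a) :
    vReward G u a b ≤ vReward G u a' b := by
  refine Finset.sum_le_sum fun p _ => ?_
  refine ENNReal.toReal_mono (vol_inter_ne_top _ _ _) (measure_mono ?_)
  exact Set.inter_subset_inter_left _ (Set.Icc_subset_Icc_left h)

/-- If `t' ≤ t_i` is feasible as a new exit time for `v_i`
(i.e. `t' ≥ ℓ⁺(v_0)` when `i = 0` and `t' ≥ t_{i-1} + ℓ⁺(v_{i-1}, v_i)` when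
`i ≥ 1`) and no reward is obtained at `v_i` during `[t', t_i]`, then replacing
`t_i` by `t'` yields a timing profile whose reward is at least as large. -/
theorem stmt4 {V : Type} (G : TAI V) (v : ℕ → V) (k : ℕ)
    (hpath : IsPath G v k) (T : ℕ → ℝ) (hT : IsTP G v k T)
    (i : ℕ) (hik : i < k) (t' : ℝ) (ht' : t' ≤ T i)
    (h0 : i = 0 → ellPlus G v k 0 ≤ t')
    (h1 : 1 ≤ i → T (i - 1) + (ellPlus G v k i - ellPlus G v k (i - 1)) ≤ t')
    (hzero : vReward G (v i) t' (T i) = 0) :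
    IsTP G v k (Function.update T i t') ∧
      profReward G v k T ≤ profReward G v k (Function.update T i t') := by
  obtain ⟨hT1, hT2, hT3⟩ := hT
  constructor
  · refine ⟨?_, ?_, ?_⟩
    · intro hk
      rcases Nat.eq_zero_or_pos i with hi | hi
      · subst hi; simpa using h0 rfl
      · rw [Function.update_of_ne (by omega)]
        exact hT1 hk
    · intro j hj
      rcases eq_or_ne j i with rfl | hji
      · rw [Function.update_self, Function.update_of_ne (by omega)]
        calc t' + (ellPlus G v k (j + 1) - ellPlus G v k j)
            ≤ T j + (ellPlus G v k (j + 1) - ellPlus G v k j) := by linarith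
          _ ≤ T (j + 1) := hT2 j hj
      · rcases eq_or_ne (j + 1) i with hj1 | hj1
        · have hi1 : i = j + 1 := hj1.symm
          subst hi1
          rw [Function.update_of_ne hji, Function.update_self]
          have := h1 (by omega)
          simpa using this
        · rw [Function.update_of_ne hji, Function.update_of_ne hj1]
          exact hT2 j hj
    · intro hk
      rcases eq_or_ne (k - 1) i with hki | hki
      · rw [hki, Function.update_self]
        have := hT3 hk
        rw [hki] at this
        linarith
      · rw [Function.update_of_ne hki]
        exact hT3 hk
  · unfold profReward
    refine Finset.sum_le_sum fun j hj => ?_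
    simp only [Finset.mem_range] at hj
    rcases eq_or_ne j i with rfl | hji
    · -- term i : upper endpoint changes from T i to t'
      have hjk : j ≠ k := by omega
      simp only [if_neg hjk]
      have hupd : Function.update T j t' j = t' := Function.update_self _ _ _
      rw [hupd]
      have hprev : (if j = 0 then (0:ℝ) else Function.update T j t' (j - 1)) =
          (if j = 0 then (0:ℝ) else T (j - 1)) := by
        rcases eq_or_ne j 0 with h | h
        · simp [h]
        · rw [if_neg h, if_neg h, Function.update_of_ne (by omega)]
      rw [hprev]
      set a := (if j = 0 then (0:ℝ) else T (j - 1)) with ha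
      calc vReward G (v j) a (T j)
          ≤ vReward G (v j) a t' + vReward G (v j) t' (T j) := vReward_split G (v j) a t' (T j)
        _ = vReward G (v j) a t' := by rw [hzero]; ring
    · rcases eq_or_ne j (i + 1) with rfl | hji1
      · -- term i+1 : lower endpoint changes from T i to t'
        have hj0 : i + 1 ≠ 0 := by omega
        rw [if_neg hj0, if_neg hj0, show i + 1 - 1 = i from rfl, Function.update_self]
        have hupd2 : (if i + 1 = k then (1:ℝ) else Function.update T i t' (i + 1)) =
            (if i + 1 = k then (1:ℝ) else T (i + 1)) := by
          rcases eq_or_ne (i + 1) k with h | h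
          · simp [h]
          · rw [if_neg h, if_neg h, Function.update_of_ne (by omega)]
        rw [hupd2]
        exact vReward_mono_left G (v (i + 1)) (T i) t' _ ht'
      · -- other terms unchanged
        have hprev : (if j = 0 then (0:ℝ) else Function.update T i t' (j - 1)) =
            (if j = 0 then (0:ℝ) else T (j - 1)) := by
          rcases eq_or_ne j 0 with h | h
          · simp [h]
          · rw [if_neg h, if_neg h, Function.update_of_ne (by omega)]
        have hcur : (if j = k then (1:ℝ) else Function.update T i t' j) =
            (if j = k then (1:ℝ) else T j) := by
          rcases eq_or_ne j k with h | h
          · simp [h]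
          · rw [if_neg h, if_neg h, Function.update_of_ne hji]
        rw [hprev, hcur]
end
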